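/- arXiv:1611.05080 — 4 statements merged into one kernel-verified Lean document; each statement's English description precedes it below -/
import Mathlib

section
/- Let 𝓡 be partitioned into disjoint blocks 𝓑₁, …, 𝓑_M, and let Q be a row-stochastic matrix on 𝓡×𝓡 such that Q(·|r) = Q(·|r') whenever r and r' lie in the same block, Q(r̃|r) = 0 whenever r̃ lies outside the block of r, and Q(r|r) > 0 for every r. Let P̃(r̃|s) = ∑_r P(r|s)Q(r̃|r), and let m(r) denote the block index of r, with the block variable having conditional law P(m|s) = ∑_{r∈𝓑_m} P(r|s). Then: (i) I(S;R̃) = I(S;M), where I(S;R̃) and I(S;M) are the mutual informations computed from P̃(r̃|s) and P(m|s) respectively; and (ii) ∑_{s,r : P(s,r)>0} P(s,r) log(P(s|r)/P̃(s|r)) = I(S;R) − I(S;R̃), where P̃(s|r) is the posterior computed from the P̃-distribution (well-defined at every r with P(r) > 0 since Q(r|r) > 0). That is, under these hypotheses the decoding-oriented loss ΔI^D equals the encoding-oriented information loss ΔI(R;R̃) (Theorem 5). -/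
/-!
Since `Q(·|r)` is constant on the block of `r` and supported on it, the surrogate factors as
`P̃(r̃|s) = P(m(r̃)|s) · Q(r̃|r̃)`, a block law times a weight independent of `s`. The weight cancels
from every posterior, so `P̃(s|r̃) = P(s|m(r̃))`; and the diagonal weights `Q(r̃|r̃)` of a block are a
row of `Q`, hence sum to `1`. This gives (i), and (ii) follows by splitting the logarithm of the
posterior ratio and regrouping `I(S;M)` over the responses of each block.
-/

open Finset Real

/-- Mutual information of `S` with a code having conditional distribution `G(x|s)`:
`I = ∑_{s,x} p(s) G(x|s) log (G(x|s) / ∑_{s'} p(s') G(x|s'))`, with `0·log 0 = 0`. -/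
noncomputable def mutInfo {S X : Type*} [Fintype S] [Fintype X]
    (p : S → ℝ) (G : S → X → ℝ) : ℝ :=
  ∑ s, ∑ x, p s * G s x * Real.log (G s x / ∑ s', p s' * G s' x)

theorem Real.log_mul_div_div_mul_div {k x y z w : ℝ} (hk : k ≠ 0) (hx : x ≠ 0) (hy : y ≠ 0)
    (hz : z ≠ 0) (hw : w ≠ 0) :
    log ((k * x / y) / (k * z / w)) = log (x / y) - log (z / w) := by
  rw [mul_div_assoc k x, mul_div_assoc k z, mul_div_mul_left _ _ hk,
    log_div (div_ne_zero hx hy) (div_ne_zero hz hw)]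

theorem mul_le_sum_mul_of_nonneg {S X : Type*} [Fintype S] {p : S → ℝ} {G : S → X → ℝ}
    (hp0 : ∀ s, 0 ≤ p s) (hG0 : ∀ s x, 0 ≤ G s x) (s : S) (x : X) :
    p s * G s x ≤ ∑ s', p s' * G s' x :=
  single_le_sum (fun s' _ => mul_nonneg (hp0 s') (hG0 s' x)) (mem_univ s)

namespace BlockCode

variable {S R B : Type*} [Fintype R] [DecidableEq B]

noncomputable def blockLaw (blk : R → B) (P : S → R → ℝ) (s : S) (m : B) : ℝ :=
  ∑ r, if blk r = m then P s r else 0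

theorem sum_mul_comp_eq_sum_sum_ite_mul [Fintype B] (blk : R → B) (f : R → ℝ) (L : B → ℝ) :
    ∑ r, f r * L (blk r) = ∑ m, (∑ r, if blk r = m then f r else 0) * L m := by
  simp_rw [sum_mul, ite_mul, zero_mul]
  rw [sum_comm]
  refine sum_congr rfl fun r _ => ?_
  rw [sum_ite_eq]
  simp

theorem blockLaw_le_of_nonneg {blk : R → B} {P : S → R → ℝ} (hP0 : ∀ s r, 0 ≤ P s r)
    (s : S) (r : R) : P s r ≤ blockLaw blk P s (blk r) := by
  unfold blockLaw
  simpa using single_le_sum (f := fun r' => if blk r' = blk r then P s r' else 0)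
    (fun r' _ => by split_ifs <;> simp [hP0]) (mem_univ r)

theorem blockLaw_nonneg {blk : R → B} {P : S → R → ℝ} (hP0 : ∀ s r, 0 ≤ P s r)
    (s : S) (m : B) : 0 ≤ blockLaw blk P s m :=
  sum_nonneg fun r _ => by split_ifs <;> simp [hP0]

theorem blockLaw_eq_zero_of_forall_ne {blk : R → B} (P : S → R → ℝ) {m : B}
    (hm : ∀ r, blk r ≠ m) (s : S) : blockLaw blk P s m = 0 :=
  sum_eq_zero fun r _ => if_neg (hm r)

section StochasticCode

variable {blk : R → B} {Q : R → R → ℝ}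
  (hsame : ∀ r r', blk r = blk r' → ∀ rt, Q r rt = Q r' rt)
  (hblock : ∀ r rt, blk rt ≠ blk r → Q r rt = 0)
include hsame hblock

theorem sum_mul_code_eq_blockLaw_mul (P : S → R → ℝ) (s : S) (rt : R) :
    ∑ r, P s r * Q r rt = blockLaw blk P s (blk rt) * Q rt rt := by
  rw [blockLaw, sum_mul]
  refine sum_congr rfl fun r _ => ?_
  by_cases h : blk r = blk rt
  · rw [if_pos h, hsame r rt h rt]
  · rw [if_neg h, hblock r rt (Ne.symm h), mul_zero, zero_mul]

theorem sum_mul_sum_mul_code_eq [Fintype S] (p : S → ℝ) (P : S → R → ℝ) (rt : R) :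
    ∑ s, p s * ∑ r, P s r * Q r rt = (∑ s, p s * blockLaw blk P s (blk rt)) * Q rt rt := by
  simp_rw [sum_mul_code_eq_blockLaw_mul hsame hblock, sum_mul, mul_assoc]

theorem sum_ite_blk_eq_diag_eq_one (hQ1 : ∀ r, ∑ rt, Q r rt = 1) (r : R) :
    ∑ rt, (if blk rt = blk r then Q rt rt else 0) = 1 := by
  rw [← hQ1 r]
  refine sum_congr rfl fun rt _ => ?_
  by_cases h : blk rt = blk r
  · rw [if_pos h, hsame rt r h rt]
  · rw [if_neg h, hblock r rt h]

theorem sum_diag_mul_comp_eq_sum [Fintype B] (hQ1 : ∀ r, ∑ rt, Q r rt = 1) (F : B → ℝ)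
    (hF : ∀ m, (∀ r, blk r ≠ m) → F m = 0) :
    ∑ rt, Q rt rt * F (blk rt) = ∑ m, F m := by
  rw [sum_mul_comp_eq_sum_sum_ite_mul blk (fun rt => Q rt rt) F]
  refine sum_congr rfl fun m _ => ?_
  by_cases h : ∃ r, blk r = m
  · obtain ⟨r, rfl⟩ := h
    rw [sum_ite_blk_eq_diag_eq_one hsame hblock hQ1 r, one_mul]
  · push Not at h
    rw [hF m h, mul_zero]

theorem mutInfo_code_eq_mutInfo_blockLaw [Fintype S] [Fintype B] (hQ1 : ∀ r, ∑ rt, Q r rt = 1)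
    (hdiag : ∀ r, Q r r ≠ 0) (p : S → ℝ) (P : S → R → ℝ) :
    mutInfo p (fun s rt => ∑ r, P s r * Q r rt) = mutInfo p (blockLaw blk P) := by
  refine sum_congr rfl fun s _ => ?_
  have hterm : ∀ rt, p s * (∑ r, P s r * Q r rt) *
      log ((∑ r, P s r * Q r rt) / ∑ s', p s' * ∑ r, P s' r * Q r rt) =
      Q rt rt * (p s * blockLaw blk P s (blk rt) *
        log (blockLaw blk P s (blk rt) / ∑ s', p s' * blockLaw blk P s' (blk rt))) := by
    intro rt
    rw [sum_mul_code_eq_blockLaw_mul hsame hblock, sum_mul_sum_mul_code_eq hsame hblock,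
      mul_div_mul_right _ _ (hdiag rt)]
    ring
  simp_rw [hterm]
  refine sum_diag_mul_comp_eq_sum hsame hblock hQ1
    (fun m => p s * blockLaw blk P s m * log (blockLaw blk P s m / ∑ s', p s' * blockLaw blk P s' m))
    fun m hm => ?_
  simp [blockLaw_eq_zero_of_forall_ne P hm s]

theorem ite_mul_log_posterior_ratio_eq_sub [Fintype S] (hdiag : ∀ r, Q r r ≠ 0) {p : S → ℝ}
    (hp0 : ∀ s, 0 ≤ p s) {P : S → R → ℝ} (hP0 : ∀ s r, 0 ≤ P s r) (s : S) (r : R) :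
    (if 0 < p s * P s r then
        p s * P s r * log (((p s * P s r) / (∑ s', p s' * P s' r)) /
          ((p s * ∑ r', P s r' * Q r' r) / (∑ s', p s' * ∑ r', P s' r' * Q r' r)))
      else 0) =
      p s * P s r * log (P s r / ∑ s', p s' * P s' r) -
        p s * P s r * log (blockLaw blk P s (blk r) / ∑ s', p s' * blockLaw blk P s' (blk r)) := by
  split_ifs with h
  · have hps : 0 < p s := (hp0 s).lt_of_ne fun h0 => by simp [← h0] at h
    have hPsr : 0 < P s r := (hP0 s r).lt_of_ne fun h0 => by simp [← h0] at h
    have hPr := h.trans_le (mul_le_sum_mul_of_nonneg hp0 hP0 s r)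
    have hPM := hPsr.trans_le (blockLaw_le_of_nonneg (blk := blk) hP0 s r)
    have hDen := (mul_pos hps hPM).trans_le
      (mul_le_sum_mul_of_nonneg hp0 (blockLaw_nonneg hP0) s (blk r))
    rw [sum_mul_code_eq_blockLaw_mul hsame hblock, sum_mul_sum_mul_code_eq hsame hblock,
      ← mul_assoc, mul_div_mul_right _ _ (hdiag r),
      log_mul_div_div_mul_div hps.ne' hPsr.ne' hPr.ne' hPM.ne' hDen.ne', mul_sub]
  · have h0 : p s * P s r = 0 := le_antisymm (not_lt.mp h) (mul_nonneg (hp0 s) (hP0 s r))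
    simp [h0]

end StochasticCode

theorem mutInfo_blockLaw_eq_sum [Fintype S] [Fintype B] (blk : R → B) (p : S → ℝ)
    (P : S → R → ℝ) :
    mutInfo p (blockLaw blk P) = ∑ s, ∑ r, p s * P s r *
      log (blockLaw blk P s (blk r) / ∑ s', p s' * blockLaw blk P s' (blk r)) := by
  refine sum_congr rfl fun s _ => ?_
  simp_rw [mul_assoc (p s), ← mul_sum]
  exact congrArg _ (sum_mul_comp_eq_sum_sum_ite_mul blk (P s) _).symm

end BlockCode

open BlockCode in
theorem block_stochastic_code_encoding_equals_decoding_general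
    {S R B : Type*} [Fintype S] [Fintype R] [Fintype B] [DecidableEq B]
    (p : S → ℝ) (hp0 : ∀ s, 0 ≤ p s)
    (P : S → R → ℝ) (hP0 : ∀ s r, 0 ≤ P s r)
    (blk : R → B)
    (Q : R → R → ℝ) (hQ1 : ∀ r, ∑ rt, Q r rt = 1)
    (hsame : ∀ r r', blk r = blk r' → ∀ rt, Q r rt = Q r' rt)
    (hblock : ∀ r rt, blk rt ≠ blk r → Q r rt = 0)
    (hdiag : ∀ r, 0 < Q r r) :
    mutInfo p (fun s rt => ∑ r, P s r * Q r rt) =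
      mutInfo p (fun s m => ∑ r, if blk r = m then P s r else 0) ∧
    (∑ s, ∑ r, if 0 < p s * P s r then
        p s * P s r * Real.log
          (((p s * P s r) / (∑ s', p s' * P s' r)) /
            ((p s * ∑ r', P s r' * Q r' r) /
              (∑ s', p s' * ∑ r', P s' r' * Q r' r)))
      else 0) =
      mutInfo p P - mutInfo p (fun s rt => ∑ r, P s r * Q r rt) := by
  have hdiag_ne : ∀ r, Q r r ≠ 0 := fun r => (hdiag r).ne'
  refine ⟨mutInfo_code_eq_mutInfo_blockLaw hsame hblock hQ1 hdiag_ne p P, ?_⟩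
  simp_rw [ite_mul_log_posterior_ratio_eq_sub hsame hblock hdiag_ne hp0 hP0, sum_sub_distrib]
  rw [mutInfo_code_eq_mutInfo_blockLaw hsame hblock hQ1 hdiag_ne, mutInfo_blockLaw_eq_sum]
  rfl

/-- For a block-respecting stochastic code `Q` (rows constant within
blocks, vanishing across blocks, positive diagonal) with induced surrogate
`P̃(r̃|s) = ∑_r P(r|s) Q(r̃|r)`:
(i) `I(S;R̃) = I(S;M)`, the information carried by the block variable; and
(ii) the decoding-oriented loss `∑_{s,r : P(s,r)>0} P(s,r) log (P(s|r)/P̃(s|r))`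
equals the encoding-oriented loss `I(S;R) − I(S;R̃)`. -/
theorem block_stochastic_code_encoding_equals_decoding
    {S R B : Type*} [Fintype S] [Fintype R] [Fintype B] [DecidableEq B]
    (p : S → ℝ) (hp0 : ∀ s, 0 ≤ p s) (hp1 : ∑ s, p s = 1)
    (P : S → R → ℝ) (hP0 : ∀ s r, 0 ≤ P s r) (hP1 : ∀ s, ∑ r, P s r = 1)
    (blk : R → B)
    (Q : R → R → ℝ) (hQ0 : ∀ r rt, 0 ≤ Q r rt) (hQ1 : ∀ r, ∑ rt, Q r rt = 1)
    (hsame : ∀ r r', blk r = blk r' → ∀ rt, Q r rt = Q r' rt)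
    (hblock : ∀ r rt, blk rt ≠ blk r → Q r rt = 0)
    (hdiag : ∀ r, 0 < Q r r) :
    mutInfo p (fun s rt => ∑ r, P s r * Q r rt) =
      mutInfo p (fun s m => ∑ r, if blk r = m then P s r else 0) ∧
    (∑ s, ∑ r, if 0 < p s * P s r then
        p s * P s r * Real.log
          (((p s * P s r) / (∑ s', p s' * P s' r)) /
            ((p s * ∑ r', P s r' * Q r' r) /
              (∑ s', p s' * ∑ r', P s' r' * Q r' r)))
      else 0) =
      mutInfo p P - mutInfo p (fun s rt => ∑ r, P s r * Q r rt) :=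
  block_stochastic_code_encoding_equals_decoding_general p hp0 P hP0 blk Q hQ1 hsame hblock hdiag
end

section
/- There exist a finite stimulus set S with prior p and a conditional distribution P(r₁,r₂|s) on a finite product 𝓡₁×𝓡₂ such that I(S;R^ni) > I(S;R), where R^ni has conditional law P^ni(r₁,r₂|s) = P₁(r₁|s)P₂(r₂|s) with P₁, P₂ the coordinate marginals of P(·|s). Consequently, for this instance no row-stochastic matrix Q satisfies P^ni(r̃|s) = ∑_r P(r|s)Q(r̃|r) for all s with p(s) > 0 and all r̃. (First part of Theorem 1: the noise-independent surrogate may not be related to the actual responses through any stochastic code.) -/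
open scoped BigOperators

/-- First coordinate marginal of a conditional distribution on a product. -/
noncomputable def marg1 {S A B : Type*} [Fintype B]
    (P : S → A × B → ℝ) (s : S) (a : A) : ℝ := ∑ b, P s (a, b)

/-- Second coordinate marginal of a conditional distribution on a product. -/
noncomputable def marg2 {S A B : Type*} [Fintype A]
    (P : S → A × B → ℝ) (s : S) (b : B) : ℝ := ∑ a, P s (a, b)

/-- Noise-independent surrogate `P^ni(r₁,r₂|s) = P₁(r₁|s) P₂(r₂|s)`. -/
noncomputable def pNI2 {S A B : Type*} [Fintype A] [Fintype B]
    (P : S → A × B → ℝ) (s : S) (r : A × B) : ℝ :=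
  marg1 P s r.1 * marg2 P s r.2

/-! Take two equiprobable stimuli: under the first the two responses are equal and uniform on
`{0, 1}`, the second always produces `(0, 0)`. Decorrelating the first stimulus lowers its weight
on `(0, 0)` from `1/2` to `1/4`, which makes the stimuli easier to tell apart: `8 I` rises from
`log (4096/729)` to `log (65536/3125)`. No stochastic code can produce this: since the second
stimulus is deterministic and equals its own surrogate, a code must send `(0, 0)` to `(0, 0)`
almost surely, so the first stimulus keeps at least its weight `1/2` on `(0, 0)`. -/

open Real

section StochasticCode

variable {S A B : Type*} [Fintype A] [Fintype B] [DecidableEq A] [DecidableEq B]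

theorem pNI2_apply_of_eq_single {P : S → A × B → ℝ} {s : S} {r₀ : A × B}
    (hs : P s = Pi.single r₀ 1) : pNI2 P s r₀ = 1 := by
  simp [pNI2, marg1, marg2, hs, Pi.single_apply, Prod.ext_iff]

theorem le_pNI2_of_stochastic_code {P : S → A × B → ℝ} {Q : A × B → A × B → ℝ}
    {s₀ s₁ : S} {r₀ : A × B} (hP : ∀ r, 0 ≤ P s₀ r) (hQ : ∀ r rt, 0 ≤ Q r rt)
    (hs₁ : P s₁ = Pi.single r₀ 1)
    (hcode₀ : pNI2 P s₀ r₀ = ∑ r, P s₀ r * Q r r₀)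
    (hcode₁ : pNI2 P s₁ r₀ = ∑ r, P s₁ r * Q r r₀) :
    P s₀ r₀ ≤ pNI2 P s₀ r₀ := by
  have hfix : Q r₀ r₀ = 1 := by
    simpa [pNI2_apply_of_eq_single hs₁, hs₁, Pi.single_apply] using hcode₁.symm
  calc P s₀ r₀ = P s₀ r₀ * Q r₀ r₀ := by rw [hfix, mul_one]
    _ ≤ ∑ r, P s₀ r * Q r r₀ :=
      Finset.single_le_sum (fun r _ => mul_nonneg (hP r) (hQ r r₀)) (Finset.mem_univ r₀)
    _ = pNI2 P s₀ r₀ := hcode₀.symm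

end StochasticCode

noncomputable def uniformPrior : Fin 2 → ℝ := fun _ => 1 / 2

noncomputable def correlatedResponses : Fin 2 → Fin 2 × Fin 2 → ℝ :=
  ![fun r => if r.1 = r.2 then 1 / 2 else 0, Pi.single (0, 0) 1]

theorem correlatedResponses_nonneg (s : Fin 2) (r : Fin 2 × Fin 2) :
    0 ≤ correlatedResponses s r := by
  fin_cases s <;> simp [correlatedResponses, Pi.single_apply] <;> split_ifs <;> norm_num

theorem sum_correlatedResponses (s : Fin 2) : ∑ r, correlatedResponses s r = 1 := by
  fin_cases s <;> simp [correlatedResponses, Fintype.sum_prod_type]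

theorem mutInfo_correlatedResponses :
    8 * mutInfo uniformPrior correlatedResponses = log (4096 / 729) := by
  simp only [mutInfo, uniformPrior, correlatedResponses, Fin.sum_univ_two, Fintype.sum_prod_type]
  norm_num
  rw [show (4096 / 729 : ℝ) = (2 / 3) ^ 2 * 2 ^ 2 * (4 / 3) ^ 4 by norm_num,
    log_mul (by norm_num) (by norm_num), log_mul (by norm_num) (by norm_num),
    log_pow, log_pow, log_pow]
  push_cast; ring

theorem mutInfo_pNI2_correlatedResponses :
    8 * mutInfo uniformPrior (pNI2 correlatedResponses) = log (65536 / 3125) := by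
  simp only [mutInfo, pNI2, marg1, marg2, uniformPrior, correlatedResponses, Fin.sum_univ_two,
    Fintype.sum_prod_type]
  norm_num
  rw [show (65536 / 3125 : ℝ) = 2 / 5 * 2 ^ 3 * (8 / 5) ^ 4 by norm_num,
    log_mul (by norm_num) (by norm_num), log_mul (by norm_num) (by norm_num),
    log_pow, log_pow]
  push_cast; ring

theorem mutInfo_correlatedResponses_lt_mutInfo_pNI2 :
    mutInfo uniformPrior correlatedResponses < mutInfo uniformPrior (pNI2 correlatedResponses) := by
  have h : log (4096 / 729) < log (65536 / 3125) := log_lt_log (by norm_num) (by norm_num)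
  rw [← mutInfo_correlatedResponses, ← mutInfo_pNI2_correlatedResponses] at h
  linarith

theorem pNI2_correlatedResponses_lt :
    pNI2 correlatedResponses 0 (0, 0) < correlatedResponses 0 (0, 0) := by
  norm_num [pNI2, marg1, marg2, correlatedResponses, Fin.sum_univ_two]

/-- There is an instance in which the noise-independent surrogate
carries strictly more information than the actual responses, `I(S;R^ni) > I(S;R)`;
consequently, for this instance no row-stochastic matrix maps the actual responses
onto the surrogate ones in a stimulus-independent manner. -/
theorem noise_independent_surrogate_not_a_stochastic_code :
    ∃ (nS nA nB : ℕ) (p : Fin nS → ℝ) (P : Fin nS → Fin nA × Fin nB → ℝ),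
      (∀ s, 0 ≤ p s) ∧ (∑ s, p s = 1) ∧
      (∀ s r, 0 ≤ P s r) ∧ (∀ s, ∑ r, P s r = 1) ∧
      mutInfo p P < mutInfo p (pNI2 P) ∧
      ¬ ∃ Q : Fin nA × Fin nB → Fin nA × Fin nB → ℝ,
          (∀ r rt, 0 ≤ Q r rt) ∧ (∀ r, ∑ rt, Q r rt = 1) ∧
          (∀ s, 0 < p s → ∀ rt, pNI2 P s rt = ∑ r, P s r * Q r rt) := by
  refine ⟨2, 2, 2, uniformPrior, correlatedResponses, fun _ => by norm_num [uniformPrior],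
    by norm_num [uniformPrior], correlatedResponses_nonneg, sum_correlatedResponses,
    mutInfo_correlatedResponses_lt_mutInfo_pNI2, ?_⟩
  rintro ⟨Q, hQ, -, hcode⟩
  have hpos : ∀ s, 0 < uniformPrior s := fun _ => by norm_num [uniformPrior]
  exact (le_pNI2_of_stochastic_code (s₀ := 0) (s₁ := 1) (correlatedResponses_nonneg 0) hQ rfl
    (hcode 0 (hpos 0) _) (hcode 1 (hpos 1) _)).not_gt pNI2_correlatedResponses_lt
end

section
/- Let Q be a row-stochastic matrix from 𝓡 to a finite set 𝓡̃ that factors through a function g : 𝓡 → 𝓖 for a finite set 𝓖, i.e., Q(r̃|r) = κ(r̃, g(r)) for some row-stochastic kernel κ on 𝓖×𝓡̃, and suppose g is recoverable from the output: there is a function h : 𝓡̃ → 𝓖 with h(r̃) = m whenever κ(r̃, m) > 0. Define P̃(r̃|s) = ∑_r P(r|s)Q(r̃|r) and the conditional law of g(R) by G(m|s) = ∑_{r : g(r)=m} P(r|s). Then I(S;R̃) = I(S;g(R)), where both mutual informations are computed from p together with P̃ and G respectively. (This is the equivalence underlying binning versus bin-shuffling: a stochastic code whose channel depends on the input only through a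 recoverable deterministic feature carries exactly the information of that feature.) -/
open scoped BigOperators

/-- If the row-stochastic matrix `Q` from `𝓡` to `𝓡̃` factors
through a deterministic feature `g : 𝓡 → 𝓖` via a row-stochastic kernel `κ`
(`Q(r̃|r) = κ(g r, r̃)`), and the feature is recoverable from the output
(`h r̃ = m` whenever `κ(m, r̃) > 0`), then the stochastic code `R̃` carries exactly
the information of the feature: `I(S;R̃) = I(S;g(R))`. -/
theorem recoverable_feature_stochastic_code_information
    {S R Rt G : Type*} [Fintype S] [Fintype R] [Fintype Rt] [Fintype G]
    [DecidableEq G]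
    (p : S → ℝ) (hp0 : ∀ s, 0 ≤ p s) (hp1 : ∑ s, p s = 1)
    (P : S → R → ℝ) (hP0 : ∀ s r, 0 ≤ P s r) (hP1 : ∀ s, ∑ r, P s r = 1)
    (g : R → G) (κ : G → Rt → ℝ)
    (hκ0 : ∀ m rt, 0 ≤ κ m rt) (hκ1 : ∀ m, ∑ rt, κ m rt = 1)
    (Q : R → Rt → ℝ) (hQ : ∀ r rt, Q r rt = κ (g r) rt)
    (h : Rt → G) (hh : ∀ rt m, 0 < κ m rt → h rt = m) :
    mutInfo p (fun s rt => ∑ r, P s r * Q r rt) =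
      mutInfo p (fun s m => ∑ r, if g r = m then P s r else 0) := by
  classical
  have hκz : ∀ m rt, h rt ≠ m → κ m rt = 0 := by
    intro m rt hne
    by_contra h0
    exact hne (hh rt m ((hκ0 m rt).lt_of_ne (Ne.symm h0)))
  set G' : S → G → ℝ := fun s m => ∑ r, if g r = m then P s r else 0 with hG'
  set D : G → ℝ := fun m => ∑ s', p s' * G' s' m with hD
  have key : ∀ s rt, (∑ r, P s r * Q r rt) = G' s (h rt) * κ (h rt) rt := by
    intro s rt
    simp only [hG', Finset.sum_mul]
    refine Finset.sum_congr rfl fun r _ => ?_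
    rw [hQ]
    by_cases hgr : g r = h rt
    · rw [if_pos hgr, hgr]
    · rw [if_neg hgr, zero_mul, hκz (g r) rt (fun e => hgr e.symm), mul_zero]
  have step : ∀ s rt, p s * (∑ r, P s r * Q r rt) *
      Real.log ((∑ r, P s r * Q r rt) / ∑ s', p s' * ∑ r, P s' r * Q r rt)
      = (p s * G' s (h rt) * Real.log (G' s (h rt) / D (h rt))) * κ (h rt) rt := by
    intro s rt
    have hden : (∑ s', p s' * ∑ r, P s' r * Q r rt) = D (h rt) * κ (h rt) rt := by
      simp only [key, hD]
      rw [Finset.sum_mul]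
      exact Finset.sum_congr rfl fun s' _ => (mul_assoc _ _ _).symm
    rw [key, hden]
    rcases eq_or_ne (κ (h rt) rt) 0 with h0 | h0
    · simp [h0]
    · rw [mul_div_mul_right _ _ h0]; ring
  simp only [mutInfo]
  calc (∑ s, ∑ rt, p s * (∑ r, P s r * Q r rt) *
          Real.log ((∑ r, P s r * Q r rt) / ∑ s', p s' * ∑ r, P s' r * Q r rt))
      = ∑ s, ∑ rt, (p s * G' s (h rt) * Real.log (G' s (h rt) / D (h rt))) * κ (h rt) rt :=
        Finset.sum_congr rfl fun s _ => Finset.sum_congr rfl fun rt _ => step s rt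
    _ = ∑ s, ∑ m, p s * G' s m * Real.log (G' s m / D m) := by
        refine Finset.sum_congr rfl fun s _ => ?_
        have hexp : ∀ rt : Rt, (p s * G' s (h rt) * Real.log (G' s (h rt) / D (h rt))) * κ (h rt) rt
            = ∑ m, (p s * G' s m * Real.log (G' s m / D m)) * κ m rt := by
          intro rt
          rw [Finset.sum_eq_single (h rt)]
          · intro m _ hne; rw [hκz m rt (Ne.symm hne), mul_zero]
          · intro habs; exact absurd (Finset.mem_univ _) habs
        simp_rw [hexp]
        rw [Finset.sum_comm]
        refine Finset.sum_congr rfl fun m _ => ?_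
        rw [← Finset.mul_sum, hκ1 m, mul_one]
    _ = ∑ s, ∑ m, p s * G' s m * Real.log (G' s m / ∑ s', p s' * G' s' m) := rfl
end

section
/- Assume the response set is a finite product 𝓡 = ∏_{n=1}^N 𝓡_n and the joint distribution has full support (P(s,r) > 0 for all s, r). For θ ∈ ℝ define the tilted posterior P_θ(s|r) = p(s)P^ni(r|s)^θ / ∑_{s'} p(s')P^ni(r|s')^θ and the mismatched loss D(θ) = ∑_{s,r} P(s,r) log(P(s|r)/P_θ(s|r)). Then D(0) = I(S;R), so inf_{θ∈ℝ} D(θ) ≤ I(S;R); and inf_{θ∈ℝ} D(θ) = I(S;R) if and only if every coordinate marginal P_n(·|s) is the same for all stimuli s (equivalently, I(S;R_n) = 0 for every n, equivalently the encoding loss ΔI(R;R^ni) = I(S;R) − I(S;R^ni) equals the full information I(S;R)). (When ignoring noise correlations, the mismatched-decoding loss D_DL equals the total encoded information if and only if the corresponding encoding loss does.) -/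
open scoped BigOperators

/-- The `n`-th coordinate marginal `P_n(x|s)` of a conditional distribution on a
finite product response set. -/
noncomputable def coordMarginal {S : Type*} {N : ℕ} {R : Fin N → Type*}
    [∀ n, Fintype (R n)] [∀ n, DecidableEq (R n)]
    (P : S → (∀ n, R n) → ℝ) (n : Fin N) (s : S) (x : R n) : ℝ :=
  ∑ r, if r n = x then P s r else 0

/-- The noise-independent surrogate `P^ni(r|s) = ∏_n P_n(r_n|s)`. -/
noncomputable def pNI {S : Type*} {N : ℕ} {R : Fin N → Type*}
    [∀ n, Fintype (R n)] [∀ n, DecidableEq (R n)]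
    (P : S → (∀ n, R n) → ℝ) (s : S) (r : ∀ n, R n) : ℝ :=
  ∏ n, coordMarginal P n s (r n)

/-- The mismatched loss `D(θ) = ∑_{s,r} P(s,r) log (P(s|r) / P_θ(s|r))`, where
`P_θ(s|r) = p(s) P^ni(r|s)^θ / ∑_{s'} p(s') P^ni(r|s')^θ` is the tilted posterior
(the exponentiation is the real power `Real.rpow`). -/
noncomputable def mismatchLoss {S : Type*} [Fintype S] {N : ℕ} {R : Fin N → Type*}
    [∀ n, Fintype (R n)] [∀ n, DecidableEq (R n)]
    (p : S → ℝ) (P : S → (∀ n, R n) → ℝ) (θ : ℝ) : ℝ :=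
  ∑ s, ∑ r, p s * P s r *
    Real.log (((p s * P s r) / (∑ s', p s' * P s' r)) /
      ((p s * pNI P s r ^ θ) / (∑ s', p s' * pNI P s' r ^ θ)))


/-!
Write `D(θ) = I(S;R) + ∑_r P(r) log ∑_s p(s) P^ni(r|s)^θ - θ 𝔼 log P^ni(R|S)`. Then `D(0) = I`,
and `D ≥ 0` by Gibbs' inequality, so the infimum equals `I` exactly when `θ = 0` minimises `D`,
which forces `D'(0) = 0`. Now `-D'(0) = ∑_{s,s'} p(s) p(s') ∑_r (P(r|s) - P(r|s')) log P^ni(r|s)`,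
and since `log P^ni` is a sum over coordinates this splits as a sum over `n` of
`½ ∑_{s,s'} p(s) p(s') ∑_x (P_n(x|s) - P_n(x|s')) (log P_n(x|s) - log P_n(x|s'))`: nonnegative
terms that vanish only if all coordinate marginals agree. Conversely, if they agree then
`P^ni(r|s)` does not depend on `s`, the tilted posterior is the prior, and `D(θ) = I` for all `θ`.
-/

open Finset Real

theorem sum_mul_log_div_nonneg {ι : Type*} [Fintype ι] {a b : ι → ℝ} (ha : ∀ i, 0 < a i)
    (hb : ∀ i, 0 < b i) (hab : ∑ i, b i ≤ ∑ i, a i) : 0 ≤ ∑ i, a i * log (a i / b i) := by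
  calc 0 ≤ ∑ i, (a i - b i) := by rw [sum_sub_distrib]; linarith
    _ ≤ ∑ i, a i * log (a i / b i) := sum_le_sum fun i _ => by
      have h := mul_le_mul_of_nonneg_left
        (one_sub_inv_le_log_of_pos (div_pos (ha i) (hb i))) (ha i).le
      rwa [inv_div, mul_sub, mul_one, mul_div_cancel₀ _ (ha i).ne'] at h

theorem sub_mul_log_sub_pos {a b : ℝ} (ha : 0 < a) (hb : 0 < b) (hab : a ≠ b) :
    0 < (a - b) * (log a - log b) := by
  rcases hab.lt_or_gt with h | h
  · exact mul_pos_of_neg_of_neg (sub_neg.2 h) (sub_neg.2 (log_lt_log ha h))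
  · exact mul_pos (sub_pos.2 h) (sub_pos.2 (log_lt_log hb h))

theorem sub_mul_log_sub_nonneg {a b : ℝ} (ha : 0 < a) (hb : 0 < b) :
    0 ≤ (a - b) * (log a - log b) := by
  rcases eq_or_ne a b with rfl | hab
  · simp
  · exact (sub_mul_log_sub_pos ha hb hab).le

section Tilted

variable {S X : Type*} [Fintype S] [Fintype X] {p : S → ℝ} {G q : S → X → ℝ}

noncomputable def tiltedLoss (p : S → ℝ) (G q : S → X → ℝ) (θ : ℝ) : ℝ :=
  ∑ s, ∑ x, p s * G s x *
    log (((p s * G s x) / (∑ s', p s' * G s' x)) /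
      ((p s * q s x ^ θ) / (∑ s', p s' * q s' x ^ θ)))

theorem tiltedLoss_eq_mutInfo_of_rpow_eq {θ : ℝ} (hp : ∀ s, 0 < p s) (hp1 : ∑ s, p s = 1)
    (hq0 : ∀ s x, q s x ^ θ ≠ 0) (hq : ∀ s s' x, q s x ^ θ = q s' x ^ θ) :
    tiltedLoss p G q θ = mutInfo p G := by
  refine sum_congr rfl fun s _ => sum_congr rfl fun x _ => ?_
  have hZ : ∑ s', p s' * q s' x ^ θ = q s x ^ θ := by
    simp_rw [hq _ s x, ← sum_mul, hp1, one_mul]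
  rw [hZ, mul_div_cancel_right₀ _ (hq0 s x), mul_div_assoc, mul_div_cancel_left₀ _ (hp s).ne']

theorem tiltedLoss_nonneg (hp : ∀ s, 0 < p s) (hG : ∀ s x, 0 < G s x) (hq : ∀ s x, 0 < q s x)
    (θ : ℝ) : 0 ≤ tiltedLoss p G q θ := by
  -- the relative entropy of `p(s) G(x|s)` from `M(x) P_θ(s|x)`, with `M = ∑ₛ p G` the response
  -- marginal; both have the same total mass
  have hM : ∀ s x, 0 < ∑ t, p t * G t x := fun s x =>
    sum_pos (fun t _ => mul_pos (hp t) (hG t x)) ⟨s, mem_univ s⟩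
  have hZ : ∀ s x, 0 < ∑ t, p t * q t x ^ θ := fun s x =>
    sum_pos (fun t _ => mul_pos (hp t) (rpow_pos_of_pos (hq t x) θ)) ⟨s, mem_univ s⟩
  have hmass : ∑ i : S × X, (∑ t, p t * G t i.2) *
        (p i.1 * q i.1 i.2 ^ θ / ∑ t, p t * q t i.2 ^ θ)
      = ∑ i : S × X, p i.1 * G i.1 i.2 := by
    simp only [Fintype.sum_prod_type_right]
    refine sum_congr rfl fun x _ => ?_
    rcases isEmpty_or_nonempty S with hS | ⟨⟨s⟩⟩
    · simp
    rw [← mul_sum, ← sum_div, div_self (hZ s x).ne', mul_one]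
  have h := sum_mul_log_div_nonneg (fun i : S × X => mul_pos (hp i.1) (hG i.1 i.2))
    (fun i => mul_pos (hM i.1 i.2) (div_pos (mul_pos (hp i.1) (rpow_pos_of_pos (hq i.1 i.2) θ))
      (hZ i.1 i.2))) hmass.le
  rw [Fintype.sum_prod_type] at h
  simpa only [tiltedLoss, div_div] using h

theorem tiltedLoss_eq_mutInfo_add (hp : ∀ s, 0 < p s) (hG : ∀ s x, 0 < G s x)
    (hq : ∀ s x, 0 < q s x) (θ : ℝ) :
    tiltedLoss p G q θ = mutInfo p G + (∑ x, (∑ s, p s * G s x) * log (∑ s, p s * q s x ^ θ)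
      - θ * ∑ s, ∑ x, p s * G s x * log (q s x)) := by
  have hterm : ∀ s x, log (((p s * G s x) / (∑ s', p s' * G s' x)) /
      ((p s * q s x ^ θ) / (∑ s', p s' * q s' x ^ θ)))
      = log (G s x / ∑ s', p s' * G s' x) + log (∑ s', p s' * q s' x ^ θ)
        - θ * log (q s x) := fun s x => by
    have hM : 0 < ∑ t, p t * G t x := sum_pos (fun t _ => mul_pos (hp t) (hG t x)) ⟨s, mem_univ s⟩
    have hZ : 0 < ∑ t, p t * q t x ^ θ :=
      sum_pos (fun t _ => mul_pos (hp t) (rpow_pos_of_pos (hq t x) θ)) ⟨s, mem_univ s⟩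
    have hw := rpow_pos_of_pos (hq s x) θ
    rw [← log_rpow (hq s x), ← log_mul (div_pos (hG s x) hM).ne' hZ.ne',
      ← log_div (mul_pos (div_pos (hG s x) hM) hZ).ne' hw.ne']
    congr 1
    field_simp [(hp s).ne']
  have hswap : ∑ s, ∑ x, p s * G s x * log (∑ s', p s' * q s' x ^ θ)
      = ∑ x, (∑ s, p s * G s x) * log (∑ s, p s * q s x ^ θ) := by
    rw [sum_comm]; simp_rw [sum_mul]
  calc tiltedLoss p G q θ
      = ∑ s, ∑ x, (p s * G s x * log (G s x / ∑ s', p s' * G s' x)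
          + p s * G s x * log (∑ s', p s' * q s' x ^ θ)
          - θ * (p s * G s x * log (q s x))) :=
        sum_congr rfl fun s _ => sum_congr rfl fun x _ => by rw [hterm]; ring
    _ = _ := by simp only [sum_add_distrib, sum_sub_distrib, ← mul_sum, hswap, mutInfo]; ring

noncomputable def pairwiseContrast (p : S → ℝ) (G φ : S → X → ℝ) : ℝ :=
  ∑ s, ∑ s', p s * p s' * ∑ x, (G s x - G s' x) * φ s x

theorem pairwiseContrast_eq (hp1 : ∑ s, p s = 1) (φ : S → X → ℝ) :
    pairwiseContrast p G φ = ∑ s, ∑ x, p s * G s x * φ s x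
      - ∑ x, (∑ s, p s * G s x) * ∑ s, p s * φ s x := by
  have hfirst : ∑ s, ∑ s', p s * p s' * ∑ x, G s x * φ s x = ∑ s, ∑ x, p s * G s x * φ s x := by
    refine sum_congr rfl fun s _ => ?_
    rw [← sum_mul, ← mul_sum, hp1, mul_one, mul_sum]
    simp_rw [mul_assoc]
  have hsecond : ∑ s, ∑ s', p s * p s' * ∑ x, G s' x * φ s x
      = ∑ x, (∑ s, p s * G s x) * ∑ s, p s * φ s x := by
    simp_rw [sum_mul_sum, mul_sum]
    rw [sum_comm, sum_comm_cycle]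
    exact sum_congr rfl fun x _ => sum_congr rfl fun s' _ => sum_congr rfl fun s _ => by ring
  simp only [pairwiseContrast, sub_mul, sum_sub_distrib, mul_sub, hfirst, hsecond]

theorem hasDerivAt_tiltedLoss_zero (hp : ∀ s, 0 < p s) (hp1 : ∑ s, p s = 1)
    (hG : ∀ s x, 0 < G s x) (hq : ∀ s x, 0 < q s x) :
    HasDerivAt (tiltedLoss p G q)
      (-pairwiseContrast p G fun s x => log (q s x)) 0 := by
  have hlogZ : ∀ x, HasDerivAt (fun θ : ℝ => log (∑ s, p s * q s x ^ θ))
      (∑ s, p s * log (q s x)) 0 := by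
    intro x
    have hZ := HasDerivAt.sum fun s (_ : s ∈ univ) =>
      ((hasStrictDerivAt_const_rpow (hq s x) 0).hasDerivAt.const_mul (p s))
    simpa [hp1] using hZ.log (by simp [hp1])
  rw [funext (tiltedLoss_eq_mutInfo_add hp hG hq)]
  have hD := ((HasDerivAt.sum fun x (_ : x ∈ univ) => (hlogZ x).const_mul (∑ s, p s * G s x)).sub
    ((hasDerivAt_id (0 : ℝ)).mul_const (∑ s, ∑ x, p s * G s x * log (q s x)))).const_add
    (mutInfo p G)
  rw [pairwiseContrast_eq hp1, neg_sub]
  simpa using hD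

theorem pairwiseContrast_log_eq_zero_of_forall_le (hp : ∀ s, 0 < p s) (hp1 : ∑ s, p s = 1)
    (hG : ∀ s x, 0 < G s x) (hq : ∀ s x, 0 < q s x)
    (h : ∀ θ, tiltedLoss p G q 0 ≤ tiltedLoss p G q θ) :
    pairwiseContrast p G (fun s x => log (q s x)) = 0 :=
  neg_eq_zero.1 <| IsLocalMin.hasDerivAt_eq_zero (Filter.Eventually.of_forall h)
    (hasDerivAt_tiltedLoss_zero hp hp1 hG hq)

theorem two_mul_pairwiseContrast (p : S → ℝ) (G φ : S → X → ℝ) :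
    2 * pairwiseContrast p G φ
      = ∑ s, ∑ s', p s * p s' * ∑ x, (G s x - G s' x) * (φ s x - φ s' x) := by
  have hswap : pairwiseContrast p G φ
      = ∑ s, ∑ s', p s' * p s * ∑ x, (G s' x - G s x) * φ s' x := sum_comm
  rw [two_mul]
  nth_rw 2 [hswap]
  rw [pairwiseContrast, ← sum_add_distrib]
  refine sum_congr rfl fun s _ => ?_
  rw [← sum_add_distrib]
  refine sum_congr rfl fun s' _ => ?_
  rw [mul_comm (p s') (p s), ← mul_add, ← sum_add_distrib]
  congr 1
  exact sum_congr rfl fun x _ => by ring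

theorem pairwiseContrast_log_nonneg (hp : ∀ s, 0 ≤ p s) (hG : ∀ s x, 0 < G s x) :
    0 ≤ pairwiseContrast p G (fun s x => log (G s x)) := by
  have h : 0 ≤ 2 * pairwiseContrast p G (fun s x => log (G s x)) := by
    rw [two_mul_pairwiseContrast]
    exact sum_nonneg fun s _ => sum_nonneg fun s' _ => mul_nonneg (mul_nonneg (hp s) (hp s'))
      (sum_nonneg fun x _ => sub_mul_log_sub_nonneg (hG s x) (hG s' x))
  linarith

theorem pairwiseContrast_log_eq_zero_iff (hp : ∀ s, 0 < p s) (hG : ∀ s x, 0 < G s x) :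
    pairwiseContrast p G (fun s x => log (G s x)) = 0 ↔ ∀ s s', G s = G s' := by
  have hterm : ∀ t t', 0 ≤ p t * p t' * ∑ y, (G t y - G t' y) * (log (G t y) - log (G t' y)) :=
    fun t t' => mul_nonneg (mul_nonneg (hp t).le (hp t').le)
      (sum_nonneg fun y _ => sub_mul_log_sub_nonneg (hG t y) (hG t' y))
  constructor
  · intro h s s'
    funext x
    by_contra hne
    have hpos : 0 < 2 * pairwiseContrast p G (fun s x => log (G s x)) := by
      rw [two_mul_pairwiseContrast]
      refine sum_pos' (fun t _ => sum_nonneg fun t' _ => hterm t t') ⟨s, mem_univ s, ?_⟩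
      refine sum_pos' (fun t' _ => hterm s t') ⟨s', mem_univ s', ?_⟩
      exact mul_pos (mul_pos (hp s) (hp s'))
        (sum_pos' (fun y _ => sub_mul_log_sub_nonneg (hG s y) (hG s' y))
          ⟨x, mem_univ x, sub_mul_log_sub_pos (hG s x) (hG s' x) hne⟩)
    linarith
  · intro h
    exact sum_eq_zero fun s _ => sum_eq_zero fun s' _ => by simp [h s s']

end Tilted

section Coordinates

variable {S : Type*} {N : ℕ} {R : Fin N → Type*} [∀ n, Fintype (R n)] [∀ n, DecidableEq (R n)]
  {P : S → (∀ n, R n) → ℝ}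

theorem sum_mul_apply_eq_sum_coordMarginal_mul (P : S → (∀ n, R n) → ℝ) (n : Fin N) (s : S)
    (f : R n → ℝ) : ∑ r, P s r * f (r n) = ∑ x, coordMarginal P n s x * f x := by
  simp only [coordMarginal, sum_mul, ite_mul, zero_mul]
  rw [sum_comm]
  simp

theorem coordMarginal_pos [Nonempty (∀ n, R n)] (hP : ∀ s r, 0 < P s r) (n : Fin N) (s : S)
    (x : R n) : 0 < coordMarginal P n s x := by
  obtain ⟨r₀⟩ := ‹Nonempty (∀ n, R n)›
  refine sum_pos' (fun r _ => ite_nonneg (hP s r).le le_rfl)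
    ⟨Function.update r₀ n x, mem_univ _, ?_⟩
  simp [hP]

theorem pNI_pos (hP : ∀ s r, 0 < P s r) (s : S) (r : ∀ n, R n) : 0 < pNI P s r :=
  haveI : Nonempty (∀ n, R n) := ⟨r⟩
  prod_pos fun n _ => coordMarginal_pos hP n s (r n)

theorem log_pNI (hP : ∀ s r, 0 < P s r) (s : S) (r : ∀ n, R n) :
    log (pNI P s r) = ∑ n, log (coordMarginal P n s (r n)) :=
  haveI : Nonempty (∀ n, R n) := ⟨r⟩
  log_prod fun n _ => (coordMarginal_pos hP n s (r n)).ne'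

theorem pairwiseContrast_log_pNI [Fintype S] (hP : ∀ s r, 0 < P s r) (p : S → ℝ) :
    pairwiseContrast p P (fun s r => log (pNI P s r))
      = ∑ n, pairwiseContrast p (coordMarginal P n) fun s x => log (coordMarginal P n s x) := by
  have hinner : ∀ s s', ∑ r, (P s r - P s' r) * log (pNI P s r)
      = ∑ n, ∑ x, (coordMarginal P n s x - coordMarginal P n s' x)
          * log (coordMarginal P n s x) := fun s s' => by
    simp only [log_pNI hP, mul_sum]
    rw [sum_comm]
    refine sum_congr rfl fun n _ => ?_
    simp only [sub_mul, sum_sub_distrib]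
    exact congrArg₂ (· - ·)
      (sum_mul_apply_eq_sum_coordMarginal_mul P n s fun x => log (coordMarginal P n s x))
      (sum_mul_apply_eq_sum_coordMarginal_mul P n s' fun x => log (coordMarginal P n s x))
  simp only [pairwiseContrast, hinner, mul_sum]
  exact sum_comm_cycle

end Coordinates

theorem mismatched_loss_reaches_total_information_iff_general
    {S : Type*} [Fintype S] {N : ℕ} (R : Fin N → Type*)
    [∀ n, Fintype (R n)] [∀ n, DecidableEq (R n)]
    (p : S → ℝ) (hp : ∀ s, 0 < p s) (hp1 : ∑ s, p s = 1)
    (P : S → (∀ n, R n) → ℝ) (hP0 : ∀ s r, 0 < P s r) :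
    mismatchLoss p P 0 = mutInfo p P ∧
    (⨅ θ : ℝ, mismatchLoss p P θ) ≤ mutInfo p P ∧
    ((⨅ θ : ℝ, mismatchLoss p P θ) = mutInfo p P ↔
      ∀ (n : Fin N) (s s' : S) (x : R n),
        coordMarginal P n s x = coordMarginal P n s' x) := by
  have h0 : mismatchLoss p P 0 = mutInfo p P :=
    tiltedLoss_eq_mutInfo_of_rpow_eq hp hp1 (by simp) (by simp)
  have hbdd : BddBelow (Set.range (mismatchLoss p P)) :=
    ⟨0, Set.forall_mem_range.2 (tiltedLoss_nonneg hp hP0 (pNI_pos hP0))⟩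
  refine ⟨h0, h0 ▸ ciInf_le hbdd 0, fun hinf => ?_, fun hmarg => ?_⟩
  · rcases isEmpty_or_nonempty (∀ n, R n) with hR | hR
    · -- every coordinate marginal is then an empty sum
      simp [coordMarginal]
    have hmin : ∀ θ, mismatchLoss p P 0 ≤ mismatchLoss p P θ := fun θ =>
      h0.trans_le (hinf ▸ ciInf_le hbdd θ)
    have hzero := pairwiseContrast_log_eq_zero_of_forall_le hp hp1 hP0 (pNI_pos hP0) hmin
    rw [pairwiseContrast_log_pNI hP0, sum_eq_zero_iff_of_nonneg fun n _ =>
      pairwiseContrast_log_nonneg (fun s => (hp s).le) (coordMarginal_pos hP0 n)] at hzero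
    intro n s s' x
    exact congrFun ((pairwiseContrast_log_eq_zero_iff hp (coordMarginal_pos hP0 n)).1
      (hzero n (mem_univ n)) s s') x
  · have hconst : ∀ θ, mismatchLoss p P θ = mutInfo p P := fun θ =>
      tiltedLoss_eq_mutInfo_of_rpow_eq hp hp1
        (fun s r => (rpow_pos_of_pos (pNI_pos hP0 s r) θ).ne')
        (fun s s' r => by simp only [pNI, hmarg _ s s'])
    simp [hconst]

/-- Under full joint support, `D(0) = I(S;R)`, hence
`inf_θ D(θ) ≤ I(S;R)`; and `inf_θ D(θ) = I(S;R)` iff every coordinate marginal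
`P_n(·|s)` is the same for all stimuli: when ignoring noise correlations, the
mismatched-decoding loss equals the total encoded information iff the
corresponding encoding loss does. -/
theorem mismatched_loss_reaches_total_information_iff
    {S : Type*} [Fintype S] {N : ℕ} (R : Fin N → Type*)
    [∀ n, Fintype (R n)] [∀ n, DecidableEq (R n)]
    (p : S → ℝ) (hp : ∀ s, 0 < p s) (hp1 : ∑ s, p s = 1)
    (P : S → (∀ n, R n) → ℝ) (hP0 : ∀ s r, 0 < P s r)
    (hP1 : ∀ s, ∑ r, P s r = 1) :
    mismatchLoss p P 0 = mutInfo p P ∧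
    (⨅ θ : ℝ, mismatchLoss p P θ) ≤ mutInfo p P ∧
    ((⨅ θ : ℝ, mismatchLoss p P θ) = mutInfo p P ↔
      ∀ (n : Fin N) (s s' : S) (x : R n),
        coordMarginal P n s x = coordMarginal P n s' x) :=
  mismatched_loss_reaches_total_information_iff_general R p hp hp1 P hP0
end
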